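/- Fix z ≥ 0 and let u = F(z) ∈ [0,1]. The function defined by S(u) = Σ_{n=1}^{W} C(W-1,n-1) u^{W-n} (1-u)^{n-1} T(W,n), where T(W,n) = W²(1-ρ)/(W-ρ(W-n))² with 0 ≤ ρ < 1, is nondecreasing in u on [0,1], with S(0) = T(W,W) = 1-ρ and S(1) = T(W,1) = W²(1-ρ)/(W-ρ(W-1))². -/

import Mathlib

/-!
Substituting `ν = W - n` writes `S` in the Bernstein basis of degree `W - 1`,
`S(u) = ∑ ν, b ν * B_{W-1,ν}(u)` with `b ν = W²(1-ρ)/(W-ρν)²`, a coefficient sequence that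
increases in `ν` because `ρ ≥ 0`. A Bernstein polynomial takes the values `b 0` and `b (W-1)`
at `0` and `1`, and by summation by parts its derivative is `(W-1)` times the Bernstein
polynomial with coefficients `b (ν+1) - b ν ≥ 0`, hence nonnegative on `[0,1]`.
-/

open Polynomial Finset

noncomputable def bernsteinComb (R : Type*) [CommRing R] (n : ℕ) (c : ℕ → R) : R[X] :=
  ∑ ν ∈ range (n + 1), C (c ν) * bernsteinPolynomial R n ν

namespace bernsteinComb

variable {R : Type*} [CommRing R]

theorem eval_zero (n : ℕ) (c : ℕ → R) : (bernsteinComb R n c).eval 0 = c 0 := by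
  simp [bernsteinComb, eval_finsetSum, bernsteinPolynomial.eval_at_0]

theorem eval_one (n : ℕ) (c : ℕ → R) : (bernsteinComb R n c).eval 1 = c n := by
  simp [bernsteinComb, eval_finsetSum, bernsteinPolynomial.eval_at_1]

theorem eval_eq_sum (n : ℕ) (c : ℕ → R) (x : R) :
    (bernsteinComb R n c).eval x =
      ∑ ν ∈ range (n + 1), c ν * n.choose ν * x ^ ν * (1 - x) ^ (n - ν) := by
  simp [bernsteinComb, eval_finsetSum, bernsteinPolynomial, mul_assoc]

theorem derivative_succ (n : ℕ) (c : ℕ → R) :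
    derivative (bernsteinComb R (n + 1) c) =
      ((n + 1 : ℕ) : R[X]) * bernsteinComb R n (fun ν => c (ν + 1) - c ν) := by
  have hshift : ∑ ν ∈ range (n + 1), C (c (ν + 1)) * bernsteinPolynomial R n (ν + 1) =
      ∑ ν ∈ range (n + 1), C (c ν) * bernsteinPolynomial R n ν -
        C (c 0) * bernsteinPolynomial R n 0 := by
    have h := sum_range_succ' (fun ν => C (c ν) * bernsteinPolynomial R n ν) (n + 1)
    rw [sum_range_succ, bernsteinPolynomial.eq_zero_of_lt R n.lt_add_one, mul_zero,
      add_zero] at h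
    rw [h, add_sub_cancel_right]
  simp only [bernsteinComb, derivative_sum, derivative_C_mul]
  rw [sum_range_succ']
  simp only [bernsteinPolynomial.derivative_succ_aux, bernsteinPolynomial.derivative_zero,
    Nat.add_sub_cancel, Nat.cast_add, Nat.cast_one, mul_sub, sum_sub_distrib, C_sub, sub_mul,
    mul_left_comm (C _), ← mul_sum, hshift]
  ring

theorem eval_nonneg {n : ℕ} {c : ℕ → ℝ} (hc : ∀ ν ≤ n, 0 ≤ c ν) {x : ℝ}
    (hx : x ∈ Set.Icc (0 : ℝ) 1) : 0 ≤ (bernsteinComb ℝ n c).eval x := by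
  have h1x : 0 ≤ 1 - x := sub_nonneg.2 hx.2
  have hx0 := hx.1
  rw [eval_eq_sum]
  refine sum_nonneg fun ν hν => ?_
  have := hc ν (Nat.lt_add_one_iff.1 (mem_range.1 hν))
  positivity

theorem monotoneOn_eval {n : ℕ} {c : ℕ → ℝ} (hc : ∀ ν < n, c ν ≤ c (ν + 1)) :
    MonotoneOn (fun x => (bernsteinComb ℝ n c).eval x) (Set.Icc 0 1) := by
  refine monotoneOn_of_deriv_nonneg (convex_Icc 0 1) (Polynomial.continuousOn _)
    (Polynomial.differentiableOn _) fun x hx => ?_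
  rw [interior_Icc] at hx
  rw [Polynomial.deriv]
  cases n with
  | zero => simp [bernsteinComb, bernsteinPolynomial]
  | succ k =>
    rw [derivative_succ, eval_mul]
    refine mul_nonneg (by rw [eval_natCast]; positivity)
      (eval_nonneg (fun ν hν => ?_) (Set.Ioo_subset_Icc_self hx))
    exact sub_nonneg.2 (hc ν (Nat.lt_add_one_of_le hν))

end bernsteinComb

theorem sum_Icc_eq_eval_bernsteinComb {W : ℕ} (hW : 1 ≤ W) (g : ℝ → ℝ) (x : ℝ) :
    ∑ n ∈ Icc 1 W, ((W - 1).choose (n - 1) : ℝ) * x ^ (W - n) * (1 - x) ^ (n - 1) * g n =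
      (bernsteinComb ℝ (W - 1) (fun ν => g (W - ν))).eval x := by
  obtain ⟨m, rfl⟩ := Nat.exists_eq_add_of_le' hW
  rw [bernsteinComb.eval_eq_sum, ← sum_range_reflect, ← Ico_add_one_right_eq_Icc,
    sum_Ico_eq_sum_range]
  refine sum_congr rfl fun j hj => ?_
  have hjm : j ≤ m := Nat.lt_add_one_iff.1 (mem_range.1 hj)
  have hexp : m + 1 - (1 + j) = m - j := by omega
  have hnode : ((m + 1 : ℕ) : ℝ) - (m - j : ℕ) = (1 + j : ℕ) := by push_cast [hjm]; ring
  simp only [Nat.add_sub_cancel, Nat.add_sub_cancel_left, hexp, Nat.sub_sub_self hjm, hnode,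
    Nat.choose_symm hjm]
  ring

theorem div_sq_sub_mul_le_div_sq_sub_mul_add_one {A W ρ s : ℝ} (hA : 0 ≤ A) (hρ : 0 ≤ ρ)
    (hpos : 0 < W - ρ * (s + 1)) : A / (W - ρ * s) ^ 2 ≤ A / (W - ρ * (s + 1)) ^ 2 :=
  div_le_div_of_nonneg_left hA (by positivity) (pow_le_pow_left₀ hpos.le (by linarith) 2)

/-- The scheduling gain factor
`S(u) = Σ_{n=1}^W C(W-1,n-1) u^{W-n} (1-u)^{n-1} T(W,n)` with
`T(W,n) = W²(1-ρ)/(W-ρ(W-n))²` satisfies `S(0) = 1-ρ`,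
`S(1) = W²(1-ρ)/(W-ρ(W-1))²`, and `S` is nondecreasing on `[0,1]`. -/
theorem stmt8 (W : ℕ) (hW : 1 ≤ W) (ρ : ℝ) (hρ0 : 0 ≤ ρ) (hρ1 : ρ < 1)
    (S : ℝ → ℝ)
    (hS : ∀ u, S u = ∑ n ∈ Finset.Icc 1 W,
      (Nat.choose (W-1) (n-1) : ℝ) * u ^ (W - n) * (1 - u) ^ (n - 1) *
        ((W:ℝ)^2 * (1-ρ) / ((W:ℝ) - ρ * ((W:ℝ) - (n:ℝ)))^2)) :
    S 0 = 1 - ρ ∧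
    S 1 = (W:ℝ)^2 * (1-ρ) / ((W:ℝ) - ρ * ((W:ℝ) - 1))^2 ∧
    MonotoneOn S (Set.Icc (0:ℝ) 1) := by
  set g : ℝ → ℝ := fun t => (W : ℝ) ^ 2 * (1 - ρ) / ((W : ℝ) - ρ * ((W : ℝ) - t)) ^ 2
  have hSeq : S = fun u => (bernsteinComb ℝ (W - 1) (fun ν => g (W - ν))).eval u :=
    funext fun u => (hS u).trans (sum_Icc_eq_eval_bernsteinComb hW g u)
  have hW0 : (W : ℝ) ≠ 0 := by positivity
  subst hSeq
  refine ⟨?_, ?_, ?_⟩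
  · simp [bernsteinComb.eval_zero, g, hW0]
  · simp [bernsteinComb.eval_one, Nat.cast_sub hW, g]
  · refine bernsteinComb.monotoneOn_eval fun ν hν => ?_
    have hνW : (ν : ℝ) + 1 < W := by exact_mod_cast (by omega : ν + 1 < W)
    simp only [g, Nat.cast_add, Nat.cast_one, sub_sub_cancel]
    exact div_sq_sub_mul_le_div_sq_sub_mul_add_one (by nlinarith) hρ0 (by nlinarith)
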